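/- arXiv:1906.05475 — 6 statements merged into one kernel-verified Lean document; each statement's English description precedes it below -/
import Mathlib

section
/- Suppose u and u_c are differentiable on ℝⁿ, the functions p|∇u|², p|∇u_c|², p ∇u·∇u_c, q u², q u_c², q u u_c, f u and f u_c are all integrable on Ω, and the weak-solution identity for u_c with coefficients (p,q,f) holds tested against v = u − u_c. Then G_λ(c) = ∫_Ω ( p (|∇u|² − |∇u_c|²) + λ q (u² − u_c²) − 2 f (u − u_c) ) dx. -/
open MeasureTheory Set
open scoped RealInnerProductSpace

/-! Expanding `‖a - b‖² = ‖a‖² - ‖b‖² - 2⟪b, a - b⟫` (and its scalar analogue) pointwise writes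
the integrand of `G_λ(c)` as the claimed integrand minus twice the difference of the two sides of
the weak-solution identity tested against `u - u_c`; that difference integrates to zero. -/

theorem gradient_fun_sub {𝕜 F : Type*} [RCLike 𝕜] [NormedAddCommGroup F] [InnerProductSpace 𝕜 F]
    [CompleteSpace F] {f g : F → 𝕜} {x : F} (hf : DifferentiableAt 𝕜 f x)
    (hg : DifferentiableAt 𝕜 g x) :
    gradient (fun y => f y - g y) x = gradient f x - gradient g x := by
  simp only [gradient, fderiv_fun_sub hf hg, map_sub]

theorem norm_sub_sq_eq_norm_sq_sub_norm_sq_sub_two_inner {F : Type*} [NormedAddCommGroup F]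
    [InnerProductSpace ℝ F] (a b : F) :
    ‖a - b‖ ^ 2 = ‖a‖ ^ 2 - ‖b‖ ^ 2 - 2 * ⟪b, a - b⟫ := by
  rw [norm_sub_sq_real, inner_sub_right, real_inner_comm, real_inner_self_eq_norm_sq]
  ring

theorem integral_sub_smul_sub_of_integral_eq {α E : Type*} [MeasurableSpace α] {μ : Measure α}
    [NormedAddCommGroup E] [NormedSpace ℝ E] {f g h : α → E} (hf : Integrable f μ)
    (hg : Integrable g μ) (hh : Integrable h μ) (hgh : ∫ x, g x ∂μ = ∫ x, h x ∂μ) (c : ℝ) :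
    ∫ x, (f x - c • (g x - h x)) ∂μ = ∫ x, f x ∂μ := by
  have hcgh : Integrable (fun x => c • (g x - h x)) μ := (hg.sub hh).smul c
  rw [integral_sub hf hcgh, integral_smul, integral_sub hg hh, hgh, sub_self, smul_zero, sub_zero]

theorem Glambda_alternative_form_general {n : ℕ}
    (Ω : Set (EuclideanSpace ℝ (Fin n)))
    (lam : ℝ) (u uc p q f : EuclideanSpace ℝ (Fin n) → ℝ)
    (hu : Differentiable ℝ u) (huc : Differentiable ℝ uc)
    (hI1 : IntegrableOn (fun x => p x * ‖gradient u x‖ ^ 2) Ω)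
    (hI2 : IntegrableOn (fun x => p x * ‖gradient uc x‖ ^ 2) Ω)
    (hI3 : IntegrableOn (fun x => p x * ⟪gradient u x, gradient uc x⟫) Ω)
    (hI4 : IntegrableOn (fun x => q x * (u x) ^ 2) Ω)
    (hI5 : IntegrableOn (fun x => q x * (uc x) ^ 2) Ω)
    (hI6 : IntegrableOn (fun x => q x * (u x * uc x)) Ω)
    (hI7 : IntegrableOn (fun x => f x * u x) Ω)
    (hI8 : IntegrableOn (fun x => f x * uc x) Ω)
    (hweak : ∫ x in Ω, (p x * ⟪gradient uc x, gradient (fun y => u y - uc y) x⟫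
          + lam * q x * uc x * (u x - uc x))
        = ∫ x in Ω, f x * (u x - uc x)) :
    ∫ x in Ω, (p x * ‖gradient (fun y => u y - uc y) x‖ ^ 2
        + lam * (q x * (u x - uc x) ^ 2))
      = ∫ x in Ω, (p x * (‖gradient u x‖ ^ 2 - ‖gradient uc x‖ ^ 2)
        + lam * (q x * ((u x) ^ 2 - (uc x) ^ 2))
        - 2 * f x * (u x - uc x)) := by
  simp only [gradient_fun_sub (hu _) (huc _)] at hweak ⊢
  have hW : IntegrableOn (fun x => p x * ⟪gradient uc x, gradient u x - gradient uc x⟫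
      + lam * q x * uc x * (u x - uc x)) Ω :=
    ((hI3.sub hI2).add ((hI6.sub hI5).const_mul lam)).congr <| ae_of_all _ fun x => by
      simp only [Pi.add_apply, Pi.sub_apply]
      rw [inner_sub_right, real_inner_comm, real_inner_self_eq_norm_sq]
      ring
  have hV : IntegrableOn (fun x => f x * (u x - uc x)) Ω :=
    (hI7.sub hI8).congr <| ae_of_all _ fun x => by simp only [Pi.sub_apply]; ring
  have hR : IntegrableOn (fun x => p x * (‖gradient u x‖ ^ 2 - ‖gradient uc x‖ ^ 2)
      + lam * (q x * ((u x) ^ 2 - (uc x) ^ 2)) - 2 * f x * (u x - uc x)) Ω :=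
    (((hI1.sub hI2).add ((hI4.sub hI5).const_mul lam)).sub ((hI7.sub hI8).const_mul 2)).congr <|
      ae_of_all _ fun x => by simp only [Pi.add_apply, Pi.sub_apply]; ring
  rw [← integral_sub_smul_sub_of_integral_eq hR hW hV hweak 2]
  congr 1 with x
  rw [norm_sub_sq_eq_norm_sq_sub_norm_sq_sub_two_inner, smul_eq_mul]
  ring

/-- If `u` and `u_c` are differentiable, the listed products are integrable on `Ω`,
and the weak-solution identity for `u_c` with coefficients `(p, q, f)` holds tested against
`v = u - u_c`, then
`G_λ(c) = ∫_Ω (p (|∇u|² - |∇u_c|²) + λ q (u² - u_c²) - 2 f (u - u_c)) dx`. -/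
theorem Glambda_alternative_form {n : ℕ} (hn : 1 ≤ n)
    (Ω : Set (EuclideanSpace ℝ (Fin n))) (hΩ : IsOpen Ω)
    (lam : ℝ) (u uc p q f : EuclideanSpace ℝ (Fin n) → ℝ)
    (hu : Differentiable ℝ u) (huc : Differentiable ℝ uc)
    (hI1 : IntegrableOn (fun x => p x * ‖gradient u x‖ ^ 2) Ω)
    (hI2 : IntegrableOn (fun x => p x * ‖gradient uc x‖ ^ 2) Ω)
    (hI3 : IntegrableOn (fun x => p x * ⟪gradient u x, gradient uc x⟫) Ω)
    (hI4 : IntegrableOn (fun x => q x * (u x) ^ 2) Ω)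
    (hI5 : IntegrableOn (fun x => q x * (uc x) ^ 2) Ω)
    (hI6 : IntegrableOn (fun x => q x * (u x * uc x)) Ω)
    (hI7 : IntegrableOn (fun x => f x * u x) Ω)
    (hI8 : IntegrableOn (fun x => f x * uc x) Ω)
    (hweak : ∫ x in Ω, (p x * ⟪gradient uc x, gradient (fun y => u y - uc y) x⟫
          + lam * q x * uc x * (u x - uc x))
        = ∫ x in Ω, f x * (u x - uc x)) :
    ∫ x in Ω, (p x * ‖gradient (fun y => u y - uc y) x‖ ^ 2
        + lam * (q x * (u x - uc x) ^ 2))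
      = ∫ x in Ω, (p x * (‖gradient u x‖ ^ 2 - ‖gradient uc x‖ ^ 2)
        + lam * (q x * ((u x) ^ 2 - (uc x) ^ 2))
        - 2 * f x * (u x - uc x)) :=
  Glambda_alternative_form_general Ω lam u uc p q f hu huc hI1 hI2 hI3 hI4 hI5 hI6 hI7 hI8 hweak
end

section
/- Let ν > 0, M ≥ 0, C ≥ 0. Suppose p and q are measurable with p(x) ≥ ν and |q(x)| ≤ M for a.e. x ∈ Ω, u and u_c are continuous and differentiable on ℝⁿ, the functions p|∇(u−u_c)|², q(u−u_c)², |∇(u−u_c)|² and (u−u_c)² are integrable on Ω, and v = u − u_c satisfies the Poincaré inequality ∫_Ω v² dx ≤ C ∫_Ω |∇v|² dx. If |λ| M C ≤ ν, then G_λ(c) ≥ 0. If moreover |λ| M C < ν, then G_λ(c) = 0 if and only if u = u_c at every point of Ω. -/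
open MeasureTheory Set
open scoped RealInnerProductSpace

/-!
Writing `v = u - u_c`, the lower bound `p ≥ ν` and the bound `|q| ≤ M` combined with the Poincaré
inequality give the coercivity estimate `(ν - |λ| M C) ∫ |∇v|² ≤ G_λ(c)`. Hence `G_λ(c) ≥ 0`, and
under the strict inequality `G_λ(c) = 0` forces `∫ |∇v|² = 0`, then `∫ v² = 0` by Poincaré, so the
continuous function `v` vanishes on the open set `Ω`.
-/

section Coercivity

variable {α : Type*} [MeasurableSpace α] {μ : Measure α}

theorem mul_integral_le_integral_mul_of_ae_le {p a : α → ℝ} {ν : ℝ}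
    (hp : ∀ᵐ x ∂μ, ν ≤ p x) (ha : 0 ≤ a) (hai : Integrable a μ)
    (hpa : Integrable (fun x => p x * a x) μ) :
    ν * ∫ x, a x ∂μ ≤ ∫ x, p x * a x ∂μ := by
  rw [← integral_const_mul]
  refine integral_mono_ae (hai.const_mul ν) hpa ?_
  filter_upwards [hp] with x hx
  exact mul_le_mul_of_nonneg_right hx (ha x)

theorem abs_integral_mul_le_of_ae_abs_le {q b : α → ℝ} {M : ℝ}
    (hq : ∀ᵐ x ∂μ, |q x| ≤ M) (hb : 0 ≤ b) (hbi : Integrable b μ)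
    (hqb : Integrable (fun x => q x * b x) μ) :
    |∫ x, q x * b x ∂μ| ≤ M * ∫ x, b x ∂μ := by
  calc |∫ x, q x * b x ∂μ|
      ≤ ∫ x, |q x * b x| ∂μ := abs_integral_le_integral_abs
    _ ≤ ∫ x, M * b x ∂μ := by
        refine integral_mono_ae hqb.abs (hbi.const_mul M) ?_
        filter_upwards [hq] with x hx
        rw [abs_mul, abs_of_nonneg (hb x)]
        exact mul_le_mul_of_nonneg_right hx (hb x)
    _ = M * ∫ x, b x ∂μ := integral_const_mul M _

theorem sub_mul_integral_le_integral_of_poincare {p q a b : α → ℝ} {lam ν M C : ℝ}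
    (hp : ∀ᵐ x ∂μ, ν ≤ p x) (hq : ∀ᵐ x ∂μ, |q x| ≤ M) (hM : 0 ≤ M)
    (ha : 0 ≤ a) (hb : 0 ≤ b) (hai : Integrable a μ) (hbi : Integrable b μ)
    (hpa : Integrable (fun x => p x * a x) μ) (hqb : Integrable (fun x => q x * b x) μ)
    (hpoincare : ∫ x, b x ∂μ ≤ C * ∫ x, a x ∂μ) :
    (ν - |lam| * M * C) * ∫ x, a x ∂μ ≤ ∫ x, (p x * a x + lam * (q x * b x)) ∂μ := by
  have hpa_ge := mul_integral_le_integral_mul_of_ae_le hp ha hai hpa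
  have hlam_qb : |lam * ∫ x, q x * b x ∂μ| ≤ |lam| * (M * C * ∫ x, a x ∂μ) := by
    rw [abs_mul, mul_assoc M]
    gcongr
    exact (abs_integral_mul_le_of_ae_abs_le hq hb hbi hqb).trans (by gcongr)
  rw [integral_add hpa (hqb.const_mul lam), integral_const_mul]
  linarith [neg_abs_le (lam * ∫ x, q x * b x ∂μ)]

end Coercivity

theorem eqOn_of_setIntegral_sq_sub_eq_zero {X : Type*} [TopologicalSpace X] [MeasurableSpace X]
    {μ : Measure X} [μ.IsOpenPosMeasure] {U : Set X} (hU : IsOpen U) {u v : X → ℝ}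
    (hu : Continuous u) (hv : Continuous v) (hi : IntegrableOn (fun x => (u x - v x) ^ 2) U μ)
    (h0 : ∫ x in U, (u x - v x) ^ 2 ∂μ = 0) : EqOn u v U := by
  have hsq : (fun x => (u x - v x) ^ 2) =ᵐ[μ.restrict U] 0 :=
    (integral_eq_zero_iff_of_nonneg (fun x => sq_nonneg _) hi).mp h0
  refine Measure.eqOn_open_of_ae_eq (μ := μ) ?_ hU hu.continuousOn hv.continuousOn
  filter_upwards [hsq] with x hx
  exact sub_eq_zero.mp (pow_eq_zero_iff two_ne_zero |>.mp hx)

theorem gradient_sub_eq_zero_of_eqOn {E : Type*} [NormedAddCommGroup E] [InnerProductSpace ℝ E]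
    [CompleteSpace E] {s : Set E} (hs : IsOpen s) {u v : E → ℝ} (h : EqOn u v s) {x : E}
    (hx : x ∈ s) : gradient (fun y => u y - v y) x = 0 := by
  have hloc : (fun y => u y - v y) =ᶠ[nhds x] fun _ => (0 : ℝ) := by
    filter_upwards [hs.mem_nhds hx] with y hy
    rw [h hy, sub_self]
  rw [hloc.gradient_eq, gradient_fun_const]

theorem Glambda_nonneg_and_zero_iff_general {n : ℕ}
    (Ω : Set (EuclideanSpace ℝ (Fin n))) (hΩ : IsOpen Ω)
    (lam : ℝ) (u uc p q : EuclideanSpace ℝ (Fin n) → ℝ)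
    (ν M C : ℝ) (hM : 0 ≤ M)
    (hp : ∀ᵐ x ∂(volume.restrict Ω), ν ≤ p x)
    (hq : ∀ᵐ x ∂(volume.restrict Ω), |q x| ≤ M)
    (huC : Continuous u)
    (hucC : Continuous uc)
    (hI1 : IntegrableOn (fun x => p x * ‖gradient (fun y => u y - uc y) x‖ ^ 2) Ω)
    (hI2 : IntegrableOn (fun x => q x * (u x - uc x) ^ 2) Ω)
    (hI3 : IntegrableOn (fun x => ‖gradient (fun y => u y - uc y) x‖ ^ 2) Ω)
    (hI4 : IntegrableOn (fun x => (u x - uc x) ^ 2) Ω)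
    (hPoincare : ∫ x in Ω, (u x - uc x) ^ 2
        ≤ C * ∫ x in Ω, ‖gradient (fun y => u y - uc y) x‖ ^ 2)
    (hsmall : |lam| * M * C ≤ ν) :
    0 ≤ ∫ x in Ω, (p x * ‖gradient (fun y => u y - uc y) x‖ ^ 2
        + lam * (q x * (u x - uc x) ^ 2)) ∧
      (|lam| * M * C < ν →
        ((∫ x in Ω, (p x * ‖gradient (fun y => u y - uc y) x‖ ^ 2
            + lam * (q x * (u x - uc x) ^ 2))) = 0
          ↔ ∀ x ∈ Ω, u x = uc x)) := by
  have hcoercive := sub_mul_integral_le_integral_of_poincare (lam := lam) hp hq hM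
    (fun x => sq_nonneg ‖gradient (fun y => u y - uc y) x‖) (fun x => sq_nonneg (u x - uc x))
    hI3 hI4 hI1 hI2 hPoincare
  have hgrad_nonneg : 0 ≤ ∫ x in Ω, ‖gradient (fun y => u y - uc y) x‖ ^ 2 :=
    integral_nonneg fun x => sq_nonneg _
  refine ⟨(mul_nonneg (sub_nonneg.2 hsmall) hgrad_nonneg).trans hcoercive,
    fun hstrict => ⟨fun hzero => ?_, fun heq => ?_⟩⟩
  · have hgrad_zero : ∫ x in Ω, ‖gradient (fun y => u y - uc y) x‖ ^ 2 = 0 :=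
      le_antisymm (nonpos_of_mul_nonpos_right (hcoercive.trans hzero.le) (sub_pos.2 hstrict))
        hgrad_nonneg
    refine eqOn_of_setIntegral_sq_sub_eq_zero hΩ huC hucC hI4 (le_antisymm ?_ ?_)
    · simpa [hgrad_zero] using hPoincare
    · exact integral_nonneg fun x => sq_nonneg _
  · rw [setIntegral_congr_fun hΩ.measurableSet (g := fun _ => 0) fun x hx => ?_, integral_zero]
    simp [heq x hx, gradient_sub_eq_zero_of_eqOn hΩ heq hx]

/-- If `p ≥ ν > 0`, `|q| ≤ M` a.e. on `Ω`, `u` and `u_c` are continuous and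
differentiable, the listed integrability conditions hold and `v = u - u_c` satisfies the
Poincaré inequality with constant `C`, then `|λ| M C ≤ ν` implies `G_λ(c) ≥ 0`; and if moreover
`|λ| M C < ν`, then `G_λ(c) = 0` if and only if `u = u_c` at every point of `Ω`. -/
theorem Glambda_nonneg_and_zero_iff {n : ℕ} (hn : 1 ≤ n)
    (Ω : Set (EuclideanSpace ℝ (Fin n))) (hΩ : IsOpen Ω)
    (lam : ℝ) (u uc p q f : EuclideanSpace ℝ (Fin n) → ℝ)
    (ν M C : ℝ) (hν : 0 < ν) (hM : 0 ≤ M) (hC : 0 ≤ C)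
    (hpm : Measurable p) (hqm : Measurable q)
    (hp : ∀ᵐ x ∂(volume.restrict Ω), ν ≤ p x)
    (hq : ∀ᵐ x ∂(volume.restrict Ω), |q x| ≤ M)
    (huC : Continuous u) (hu : Differentiable ℝ u)
    (hucC : Continuous uc) (huc : Differentiable ℝ uc)
    (hI1 : IntegrableOn (fun x => p x * ‖gradient (fun y => u y - uc y) x‖ ^ 2) Ω)
    (hI2 : IntegrableOn (fun x => q x * (u x - uc x) ^ 2) Ω)
    (hI3 : IntegrableOn (fun x => ‖gradient (fun y => u y - uc y) x‖ ^ 2) Ω)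
    (hI4 : IntegrableOn (fun x => (u x - uc x) ^ 2) Ω)
    (hPoincare : ∫ x in Ω, (u x - uc x) ^ 2
        ≤ C * ∫ x in Ω, ‖gradient (fun y => u y - uc y) x‖ ^ 2)
    (hsmall : |lam| * M * C ≤ ν) :
    0 ≤ ∫ x in Ω, (p x * ‖gradient (fun y => u y - uc y) x‖ ^ 2
        + lam * (q x * (u x - uc x) ^ 2)) ∧
      (|lam| * M * C < ν →
        ((∫ x in Ω, (p x * ‖gradient (fun y => u y - uc y) x‖ ^ 2
            + lam * (q x * (u x - uc x) ^ 2))) = 0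
          ↔ ∀ x ∈ Ω, u x = uc x)) :=
  Glambda_nonneg_and_zero_iff_general Ω hΩ lam u uc p q ν M C hM hp hq huC hucC hI1 hI2 hI3 hI4
    hPoincare hsmall
end

section
/- Let ν > 0, M ≥ 0, C ≥ 0 with |λ| M C ≤ ν. Let ĉ = (P, Q, F) be a coefficient triple whose candidate solution equals the data, u_ĉ = u, and let c = (p, q, f) be any candidate triple with candidate solution u_c such that p(x) ≥ ν and |q(x)| ≤ M for a.e. x ∈ Ω, u and u_c are differentiable, the functions p|∇(u−u_c)|², q(u−u_c)², |∇(u−u_c)|² and (u−u_c)² are integrable on Ω, and v = u − u_c satisfies the Poincaré inequality ∫_Ω v² dx ≤ C ∫_Ω |∇v|² dx. Then G_λ(ĉ) = 0 and G_λ(ĉ) ≤ G_λ(c); that is, the true coefficient triple ĉ is a global minimizer of the functional G_λ. -/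
open MeasureTheory Set
open scoped RealInnerProductSpace

/-- The true coefficient triple `ĉ = (P, Q, F)`, whose candidate solution equals the
data (`u_ĉ = u`), is a global minimizer of `G_λ`: `G_λ(ĉ) = 0` and `G_λ(ĉ) ≤ G_λ(c)` for every
admissible candidate triple `c = (p, q, f)` with candidate solution `u_c`. -/
theorem true_triple_is_global_minimizer {n : ℕ} (hn : 1 ≤ n)
    (Ω : Set (EuclideanSpace ℝ (Fin n))) (hΩ : IsOpen Ω)
    (lam : ℝ) (u : EuclideanSpace ℝ (Fin n) → ℝ)
    (P Q F p q f uc : EuclideanSpace ℝ (Fin n) → ℝ)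
    (ν M C : ℝ) (hν : 0 < ν) (hM : 0 ≤ M) (hC : 0 ≤ C)
    (hsmall : |lam| * M * C ≤ ν)
    (hp : ∀ᵐ x ∂(volume.restrict Ω), ν ≤ p x)
    (hq : ∀ᵐ x ∂(volume.restrict Ω), |q x| ≤ M)
    (hu : Differentiable ℝ u) (huc : Differentiable ℝ uc)
    (hI1 : IntegrableOn (fun x => p x * ‖gradient (fun y => u y - uc y) x‖ ^ 2) Ω)
    (hI2 : IntegrableOn (fun x => q x * (u x - uc x) ^ 2) Ω)
    (hI3 : IntegrableOn (fun x => ‖gradient (fun y => u y - uc y) x‖ ^ 2) Ω)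
    (hI4 : IntegrableOn (fun x => (u x - uc x) ^ 2) Ω)
    (hPoincare : ∫ x in Ω, (u x - uc x) ^ 2
        ≤ C * ∫ x in Ω, ‖gradient (fun y => u y - uc y) x‖ ^ 2) :
    (∫ x in Ω, (P x * ‖gradient (fun y => u y - u y) x‖ ^ 2
        + lam * (Q x * (u x - u x) ^ 2))) = 0 ∧
      (∫ x in Ω, (P x * ‖gradient (fun y => u y - u y) x‖ ^ 2
          + lam * (Q x * (u x - u x) ^ 2)))
        ≤ ∫ x in Ω, (p x * ‖gradient (fun y => u y - uc y) x‖ ^ 2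
          + lam * (q x * (u x - uc x) ^ 2)) := by
  
  have hzero : (∫ x in Ω, (P x * ‖gradient (fun y => u y - u y) x‖ ^ 2
      + lam * (Q x * (u x - u x) ^ 2))) = 0 := by
    have : (fun x => (P x * ‖gradient (fun y => u y - u y) x‖ ^ 2
        + lam * (Q x * (u x - u x) ^ 2))) = fun _ => 0 := by
      funext x
      simp [gradient, sub_self]
    rw [this, integral_zero]
  refine ⟨hzero, ?_⟩
  rw [hzero]
  set A := ∫ x in Ω, ‖gradient (fun y => u y - uc y) x‖ ^ 2 with hA
  set B := ∫ x in Ω, (u x - uc x) ^ 2 with hB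
  have hA0 : 0 ≤ A := integral_nonneg fun x => by positivity
  have hB0 : 0 ≤ B := integral_nonneg fun x => by positivity
  have h1 : ν * A ≤ ∫ x in Ω, p x * ‖gradient (fun y => u y - uc y) x‖ ^ 2 := by
    rw [hA, ← integral_const_mul]
    refine integral_mono_ae (hI3.const_mul ν) hI1 ?_
    filter_upwards [hp] with x hx
    exact mul_le_mul_of_nonneg_right hx (by positivity)
  have h2 : -(|lam| * M) * B ≤ ∫ x in Ω, lam * (q x * (u x - uc x) ^ 2) := by
    rw [hB, ← integral_const_mul]
    refine integral_mono_ae (hI4.const_mul _) ((hI2.const_mul _)) ?_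
    filter_upwards [hq] with x hx
    have : |lam * (q x * (u x - uc x) ^ 2)| ≤ |lam| * M * (u x - uc x) ^ 2 := by
      rw [abs_mul, abs_mul, abs_sq]
      have : |q x| * (u x - uc x) ^ 2 ≤ M * (u x - uc x) ^ 2 :=
        mul_le_mul_of_nonneg_right hx (by positivity)
      nlinarith [abs_nonneg lam]
    nlinarith [neg_abs_le (lam * (q x * (u x - uc x) ^ 2))]
  have hsplit : (∫ x in Ω, (p x * ‖gradient (fun y => u y - uc y) x‖ ^ 2
      + lam * (q x * (u x - uc x) ^ 2)))
      = (∫ x in Ω, p x * ‖gradient (fun y => u y - uc y) x‖ ^ 2)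
        + ∫ x in Ω, lam * (q x * (u x - uc x) ^ 2) :=
    integral_add hI1 (hI2.const_mul lam)
  rw [hsplit]
  have hBA : |lam| * M * B ≤ |lam| * M * (C * A) :=
    mul_le_mul_of_nonneg_left hPoincare (by positivity)
  nlinarith [mul_le_mul_of_nonneg_right hsmall hA0]
end

section
/- Let c₁ = (p₁, q₁, f₁) with candidate solution u₁ and c₂ = (p₂, q₂, f₂) with candidate solution u₂, where u, u₁, u₂ are differentiable on ℝⁿ and all products appearing in the integrals below (pᵢ times ∇u·∇u, ∇u₁·∇u₁, ∇u₂·∇u₂, ∇u·∇uⱼ, ∇u₁·∇u₂; qᵢ times u², u₁², u₂², u u_j, u₁u₂; fᵢ times u, u₁, u₂ for i, j ∈ {1,2}) are integrable on Ω. Suppose the weak-solution identity for u₁ with coefficients (p₁,q₁,f₁) holds tested against v = u − u₁ and against v = u₂ − u₁, and the weak-solution identity for u₂ with coefficients (p₂,q₂,f₂) holds tested against v = u − u₂ and against v = u₂ − u₁. Then G_λ(c₁) − G_λ(c₂) = ∫_Ω ( (p₁ − p₂)(|∇u|² − ∇u₁·∇u₂) + λ (q₁ − q₂)(u² − u₁u₂)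 − 2 (f₁ − f₂)(u − (u₁ + u₂)/2) ) dx. -/
open MeasureTheory Set
open scoped RealInnerProductSpace

/-!
Write `a(v, w) = ∫ (p ∇v·∇w + λ q v w)` and `F(v) = ∫ f v`, so that `G_λ(c) = a(u - u_c, u - u_c)`.
If `ũ` satisfies the weak identities `a(ũ, u - ũ) = F(u - ũ)` and `a(ũ, w - ũ) = F(w - ũ)`, expanding
the square gives `G_λ = a(u, u) - a(ũ, w) - F(2u - ũ - w)`. Since this is symmetric in `ũ` and `w`,
taking `(ũ, w) = (u₁, u₂)` for `c₁` and `(u₂, u₁)` for `c₂` and subtracting the two integrands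
pointwise yields the formula.
-/

theorem integral_mul_sub {α : Type*} [MeasurableSpace α] {μ : Measure α} {g a b : α → ℝ}
    (ha : Integrable (fun x => g x * a x) μ)
    (hb : Integrable (fun x => g x * b x) μ) :
    ∫ x, g x * (a x - b x) ∂μ = ∫ x, g x * a x ∂μ - ∫ x, g x * b x ∂μ := by
  simp_rw [mul_sub]
  exact integral_sub ha hb

variable {E : Type*} [NormedAddCommGroup E] [InnerProductSpace ℝ E] [CompleteSpace E]

theorem gradient_fun_sub_s4 {a b : E → ℝ} {x : E} (ha : DifferentiableAt ℝ a x)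
    (hb : DifferentiableAt ℝ b x) :
    gradient (fun y => a y - b y) x = gradient a x - gradient b x := by
  simp only [gradient, fderiv_fun_sub ha hb, map_sub]

def WeakIdentity [MeasurableSpace E] (μ : Measure E) (p q f : E → ℝ) (lam : ℝ) (ũ v : E → ℝ) :
    Prop :=
  ∫ x, (p x * ⟪gradient ũ x, gradient v x⟫ + lam * q x * ũ x * v x) ∂μ = ∫ x, f x * v x ∂μ

section FormDensity

variable (p q f : E → ℝ) (lam : ℝ)

noncomputable def formDensity (v w : E → ℝ) (x : E) : ℝ :=
  p x * ⟪gradient v x, gradient w x⟫ + lam * (q x * (v x * w x))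

noncomputable def reducedEnergyDensity (u ũ w : E → ℝ) (x : E) : ℝ :=
  formDensity p q lam u u x - formDensity p q lam ũ w x
    - (2 * (f x * u x) - f x * ũ x - f x * w x)

variable {p q f lam}

theorem formDensity_comm (v w : E → ℝ) : formDensity p q lam v w = formDensity p q lam w v := by
  funext x
  simp only [formDensity, real_inner_comm, mul_comm (v x)]

theorem formDensity_self (v : E → ℝ) (x : E) :
    formDensity p q lam v v x = p x * ‖gradient v x‖ ^ 2 + lam * (q x * v x ^ 2) := by
  rw [formDensity, real_inner_self_eq_norm_sq, sq (v x)]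

theorem formDensity_sub_left {a b : E → ℝ} {x : E} (ha : DifferentiableAt ℝ a x)
    (hb : DifferentiableAt ℝ b x) (w : E → ℝ) :
    formDensity p q lam (fun y => a y - b y) w x
      = formDensity p q lam a w x - formDensity p q lam b w x := by
  simp only [formDensity, gradient_fun_sub_s4 ha hb, inner_sub_left]
  ring

theorem formDensity_sub_right {a b : E → ℝ} {x : E} (ha : DifferentiableAt ℝ a x)
    (hb : DifferentiableAt ℝ b x) (v : E → ℝ) :
    formDensity p q lam v (fun y => a y - b y) x
      = formDensity p q lam v a x - formDensity p q lam v b x := by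
  simp only [formDensity_comm v, formDensity_sub_left ha hb]

variable [MeasurableSpace E] {μ : Measure E}

theorem integrable_formDensity {v w : E → ℝ}
    (hp : Integrable (fun x => p x * ⟪gradient v x, gradient w x⟫) μ)
    (hq : Integrable (fun x => q x * (v x * w x)) μ) :
    Integrable (formDensity p q lam v w) μ :=
  hp.add (hq.const_mul lam)

theorem integral_formDensity_sub_sub {a b : E → ℝ} (ha : Differentiable ℝ a)
    (hb : Differentiable ℝ b) (haa : Integrable (formDensity p q lam a a) μ)
    (hab : Integrable (formDensity p q lam a b) μ) (hbb : Integrable (formDensity p q lam b b) μ) :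
    ∫ x, formDensity p q lam (fun y => a y - b y) (fun y => a y - b y) x ∂μ
      = ∫ x, formDensity p q lam a a x ∂μ - 2 * ∫ x, formDensity p q lam a b x ∂μ
        + ∫ x, formDensity p q lam b b x ∂μ := by
  have hexpand : ∀ x, formDensity p q lam (fun y => a y - b y) (fun y => a y - b y) x
      = formDensity p q lam a a x - 2 * formDensity p q lam a b x + formDensity p q lam b b x := by
    intro x
    rw [formDensity_sub_left (ha x) (hb x), formDensity_sub_right (ha x) (hb x),
      formDensity_sub_right (ha x) (hb x), formDensity_comm b a]
    ring
  simp_rw [hexpand]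
  rw [integral_add, integral_sub haa (hab.const_mul 2), integral_const_mul]
  exacts [haa.sub (hab.const_mul 2), hbb]

theorem integral_reducedEnergyDensity {u ũ w : E → ℝ}
    (huu : Integrable (formDensity p q lam u u) μ) (hũw : Integrable (formDensity p q lam ũ w) μ)
    (hfu : Integrable (fun x => f x * u x) μ) (hfũ : Integrable (fun x => f x * ũ x) μ)
    (hfw : Integrable (fun x => f x * w x) μ) :
    ∫ x, reducedEnergyDensity p q f lam u ũ w x ∂μ
      = ∫ x, formDensity p q lam u u x ∂μ - ∫ x, formDensity p q lam ũ w x ∂μ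
        - (2 * ∫ x, f x * u x ∂μ - ∫ x, f x * ũ x ∂μ - ∫ x, f x * w x ∂μ) := by
  unfold reducedEnergyDensity
  rw [integral_sub, integral_sub huu hũw, integral_sub, integral_sub (hfu.const_mul 2) hfũ,
    integral_const_mul]
  exacts [(hfu.const_mul 2).sub hfũ, hfw, huu.sub hũw, ((hfu.const_mul 2).sub hfũ).sub hfw]

theorem WeakIdentity.sub_comm {ũ a b : E → ℝ} (ha : Differentiable ℝ a) (hb : Differentiable ℝ b)
    (hweak : WeakIdentity μ p q f lam ũ (fun y => a y - b y)) :
    WeakIdentity μ p q f lam ũ (fun y => b y - a y) := by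
  have hneg : ∀ x, p x * ⟪gradient ũ x, gradient (fun y => b y - a y) x⟫
      + lam * q x * ũ x * (b x - a x) = -(p x * ⟪gradient ũ x, gradient (fun y => a y - b y) x⟫
      + lam * q x * ũ x * (a x - b x)) := by
    intro x
    simp only [gradient_fun_sub_s4 (ha x) (hb x), gradient_fun_sub_s4 (hb x) (ha x), inner_sub_right]
    ring
  simp only [WeakIdentity] at hweak ⊢
  rw [integral_congr_ae (ae_of_all _ hneg), integral_neg, hweak, ← integral_neg]
  congr 1 with x
  ring

theorem WeakIdentity.integral_formDensity_sub {ũ a b : E → ℝ} (ha : Differentiable ℝ a)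
    (hb : Differentiable ℝ b) (hũa : Integrable (formDensity p q lam ũ a) μ)
    (hũb : Integrable (formDensity p q lam ũ b) μ) (hfa : Integrable (fun x => f x * a x) μ)
    (hfb : Integrable (fun x => f x * b x) μ)
    (hweak : WeakIdentity μ p q f lam ũ (fun y => a y - b y)) :
    ∫ x, formDensity p q lam ũ a x ∂μ - ∫ x, formDensity p q lam ũ b x ∂μ
      = ∫ x, f x * a x ∂μ - ∫ x, f x * b x ∂μ := by
  have hform : ∀ x, p x * ⟪gradient ũ x, gradient (fun y => a y - b y) x⟫
      + lam * q x * ũ x * (a x - b x) = formDensity p q lam ũ a x - formDensity p q lam ũ b x := by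
    intro x
    rw [← formDensity_sub_right (ha x) (hb x), formDensity]
    ring
  simp only [WeakIdentity] at hweak
  simp_rw [hform] at hweak
  rwa [integral_sub hũa hũb, integral_mul_sub hfa hfb] at hweak

theorem integrable_reducedEnergyDensity {S : Set (E → ℝ)} {u ũ w : E → ℝ}
    (hp : ∀ a ∈ S, ∀ b ∈ S, Integrable (fun x => p x * ⟪gradient a x, gradient b x⟫) μ)
    (hq : ∀ a ∈ S, ∀ b ∈ S, Integrable (fun x => q x * (a x * b x)) μ)
    (hf : ∀ a ∈ S, Integrable (fun x => f x * a x) μ) (huS : u ∈ S) (hũS : ũ ∈ S) (hwS : w ∈ S) :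
    Integrable (reducedEnergyDensity p q f lam u ũ w) μ :=
  ((integrable_formDensity (hp u huS u huS) (hq u huS u huS)).sub
    (integrable_formDensity (hp ũ hũS w hwS) (hq ũ hũS w hwS))).sub
    ((((hf u huS).const_mul 2).sub (hf ũ hũS)).sub (hf w hwS))

theorem integral_energy_eq_of_weakIdentity {S : Set (E → ℝ)} {u ũ w : E → ℝ}
    (hp : ∀ a ∈ S, ∀ b ∈ S, Integrable (fun x => p x * ⟪gradient a x, gradient b x⟫) μ)
    (hq : ∀ a ∈ S, ∀ b ∈ S, Integrable (fun x => q x * (a x * b x)) μ)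
    (hf : ∀ a ∈ S, Integrable (fun x => f x * a x) μ)
    (hu : Differentiable ℝ u) (hũ : Differentiable ℝ ũ) (hw : Differentiable ℝ w)
    (huS : u ∈ S) (hũS : ũ ∈ S) (hwS : w ∈ S)
    (hweak_u : WeakIdentity μ p q f lam ũ (fun y => u y - ũ y))
    (hweak_w : WeakIdentity μ p q f lam ũ (fun y => w y - ũ y)) :
    ∫ x, (p x * ‖gradient (fun y => u y - ũ y) x‖ ^ 2 + lam * (q x * (u x - ũ x) ^ 2)) ∂μ
      = ∫ x, reducedEnergyDensity p q f lam u ũ w x ∂μ := by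
  have hB : ∀ a ∈ S, ∀ b ∈ S, Integrable (formDensity p q lam a b) μ :=
    fun a ha b hb => integrable_formDensity (hp a ha b hb) (hq a ha b hb)
  have hu_test := hweak_u.integral_formDensity_sub hu hũ (hB _ hũS _ huS) (hB _ hũS _ hũS)
    (hf _ huS) (hf _ hũS)
  have hw_test := hweak_w.integral_formDensity_sub hw hũ (hB _ hũS _ hwS) (hB _ hũS _ hũS)
    (hf _ hwS) (hf _ hũS)
  simp_rw [← formDensity_self]
  rw [integral_formDensity_sub_sub hu hũ (hB _ huS _ huS) (hB _ huS _ hũS) (hB _ hũS _ hũS),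
    integral_reducedEnergyDensity (hB _ huS _ huS) (hB _ hũS _ hwS) (hf _ huS) (hf _ hũS)
      (hf _ hwS), formDensity_comm u ũ]
  linear_combination hw_test - 2 * hu_test

end FormDensity

theorem Glambda_difference_formula_general {n : ℕ}
    (Ω : Set (EuclideanSpace ℝ (Fin n)))
    (lam : ℝ) (u u₁ u₂ p₁ q₁ f₁ p₂ q₂ f₂ : EuclideanSpace ℝ (Fin n) → ℝ)
    (hu : Differentiable ℝ u) (hu₁ : Differentiable ℝ u₁) (hu₂ : Differentiable ℝ u₂)
    (hIp : ∀ r ∈ ({p₁, p₂} : Set (EuclideanSpace ℝ (Fin n) → ℝ)),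
      ∀ a ∈ ({u, u₁, u₂} : Set (EuclideanSpace ℝ (Fin n) → ℝ)),
      ∀ b ∈ ({u, u₁, u₂} : Set (EuclideanSpace ℝ (Fin n) → ℝ)),
        IntegrableOn (fun x => r x * ⟪gradient a x, gradient b x⟫) Ω)
    (hIq : ∀ r ∈ ({q₁, q₂} : Set (EuclideanSpace ℝ (Fin n) → ℝ)),
      ∀ a ∈ ({u, u₁, u₂} : Set (EuclideanSpace ℝ (Fin n) → ℝ)),
      ∀ b ∈ ({u, u₁, u₂} : Set (EuclideanSpace ℝ (Fin n) → ℝ)),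
        IntegrableOn (fun x => r x * (a x * b x)) Ω)
    (hIf : ∀ r ∈ ({f₁, f₂} : Set (EuclideanSpace ℝ (Fin n) → ℝ)),
      ∀ a ∈ ({u, u₁, u₂} : Set (EuclideanSpace ℝ (Fin n) → ℝ)),
        IntegrableOn (fun x => r x * a x) Ω)
    (hweak1a : ∫ x in Ω, (p₁ x * ⟪gradient u₁ x, gradient (fun y => u y - u₁ y) x⟫
          + lam * q₁ x * u₁ x * (u x - u₁ x))
        = ∫ x in Ω, f₁ x * (u x - u₁ x))
    (hweak1b : ∫ x in Ω, (p₁ x * ⟪gradient u₁ x, gradient (fun y => u₂ y - u₁ y) x⟫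
          + lam * q₁ x * u₁ x * (u₂ x - u₁ x))
        = ∫ x in Ω, f₁ x * (u₂ x - u₁ x))
    (hweak2a : ∫ x in Ω, (p₂ x * ⟪gradient u₂ x, gradient (fun y => u y - u₂ y) x⟫
          + lam * q₂ x * u₂ x * (u x - u₂ x))
        = ∫ x in Ω, f₂ x * (u x - u₂ x))
    (hweak2b : ∫ x in Ω, (p₂ x * ⟪gradient u₂ x, gradient (fun y => u₂ y - u₁ y) x⟫
          + lam * q₂ x * u₂ x * (u₂ x - u₁ x))
        = ∫ x in Ω, f₂ x * (u₂ x - u₁ x)) :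
    (∫ x in Ω, (p₁ x * ‖gradient (fun y => u y - u₁ y) x‖ ^ 2
          + lam * (q₁ x * (u x - u₁ x) ^ 2)))
      - (∫ x in Ω, (p₂ x * ‖gradient (fun y => u y - u₂ y) x‖ ^ 2
          + lam * (q₂ x * (u x - u₂ x) ^ 2)))
      = ∫ x in Ω, ((p₁ x - p₂ x) * (‖gradient u x‖ ^ 2 - ⟪gradient u₁ x, gradient u₂ x⟫)
          + lam * ((q₁ x - q₂ x) * ((u x) ^ 2 - u₁ x * u₂ x))
          - 2 * (f₁ x - f₂ x) * (u x - (u₁ x + u₂ x) / 2)) := by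
  rw [integral_energy_eq_of_weakIdentity (hIp p₁ (by simp)) (hIq q₁ (by simp)) (hIf f₁ (by simp))
      hu hu₁ hu₂ (by simp) (by simp) (by simp) hweak1a hweak1b,
    integral_energy_eq_of_weakIdentity (hIp p₂ (by simp)) (hIq q₂ (by simp)) (hIf f₂ (by simp))
      hu hu₂ hu₁ (by simp) (by simp) (by simp) hweak2a (WeakIdentity.sub_comm hu₂ hu₁ hweak2b),
    ← integral_sub]
  · congr 1 with x
    simp only [reducedEnergyDensity, formDensity, real_inner_self_eq_norm_sq,
      real_inner_comm (gradient u₁ x)]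
    ring
  · exact integrable_reducedEnergyDensity (hIp p₁ (by simp)) (hIq q₁ (by simp)) (hIf f₁ (by simp))
      (by simp) (by simp) (by simp)
  · exact integrable_reducedEnergyDensity (hIp p₂ (by simp)) (hIq q₂ (by simp)) (hIf f₂ (by simp))
      (by simp) (by simp) (by simp)

/-- The difference formula
`G_λ(c₁) - G_λ(c₂) = ∫_Ω ((p₁-p₂)(|∇u|² - ∇u₁·∇u₂) + λ(q₁-q₂)(u² - u₁u₂)
  - 2(f₁-f₂)(u - (u₁+u₂)/2)) dx`,
under the stated integrability assumptions and the weak-solution identities for `u₁` (with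
coefficients `(p₁,q₁,f₁)`) tested against `u - u₁` and `u₂ - u₁`, and for `u₂` (with coefficients
`(p₂,q₂,f₂)`) tested against `u - u₂` and `u₂ - u₁`. -/
theorem Glambda_difference_formula {n : ℕ} (hn : 1 ≤ n)
    (Ω : Set (EuclideanSpace ℝ (Fin n))) (hΩ : IsOpen Ω)
    (lam : ℝ) (u u₁ u₂ p₁ q₁ f₁ p₂ q₂ f₂ : EuclideanSpace ℝ (Fin n) → ℝ)
    (hu : Differentiable ℝ u) (hu₁ : Differentiable ℝ u₁) (hu₂ : Differentiable ℝ u₂)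
    (hIp : ∀ r ∈ ({p₁, p₂} : Set (EuclideanSpace ℝ (Fin n) → ℝ)),
      ∀ a ∈ ({u, u₁, u₂} : Set (EuclideanSpace ℝ (Fin n) → ℝ)),
      ∀ b ∈ ({u, u₁, u₂} : Set (EuclideanSpace ℝ (Fin n) → ℝ)),
        IntegrableOn (fun x => r x * ⟪gradient a x, gradient b x⟫) Ω)
    (hIq : ∀ r ∈ ({q₁, q₂} : Set (EuclideanSpace ℝ (Fin n) → ℝ)),
      ∀ a ∈ ({u, u₁, u₂} : Set (EuclideanSpace ℝ (Fin n) → ℝ)),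
      ∀ b ∈ ({u, u₁, u₂} : Set (EuclideanSpace ℝ (Fin n) → ℝ)),
        IntegrableOn (fun x => r x * (a x * b x)) Ω)
    (hIf : ∀ r ∈ ({f₁, f₂} : Set (EuclideanSpace ℝ (Fin n) → ℝ)),
      ∀ a ∈ ({u, u₁, u₂} : Set (EuclideanSpace ℝ (Fin n) → ℝ)),
        IntegrableOn (fun x => r x * a x) Ω)
    (hweak1a : ∫ x in Ω, (p₁ x * ⟪gradient u₁ x, gradient (fun y => u y - u₁ y) x⟫
          + lam * q₁ x * u₁ x * (u x - u₁ x))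
        = ∫ x in Ω, f₁ x * (u x - u₁ x))
    (hweak1b : ∫ x in Ω, (p₁ x * ⟪gradient u₁ x, gradient (fun y => u₂ y - u₁ y) x⟫
          + lam * q₁ x * u₁ x * (u₂ x - u₁ x))
        = ∫ x in Ω, f₁ x * (u₂ x - u₁ x))
    (hweak2a : ∫ x in Ω, (p₂ x * ⟪gradient u₂ x, gradient (fun y => u y - u₂ y) x⟫
          + lam * q₂ x * u₂ x * (u x - u₂ x))
        = ∫ x in Ω, f₂ x * (u x - u₂ x))
    (hweak2b : ∫ x in Ω, (p₂ x * ⟪gradient u₂ x, gradient (fun y => u₂ y - u₁ y) x⟫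
          + lam * q₂ x * u₂ x * (u₂ x - u₁ x))
        = ∫ x in Ω, f₂ x * (u₂ x - u₁ x)) :
    (∫ x in Ω, (p₁ x * ‖gradient (fun y => u y - u₁ y) x‖ ^ 2
          + lam * (q₁ x * (u x - u₁ x) ^ 2)))
      - (∫ x in Ω, (p₂ x * ‖gradient (fun y => u y - u₂ y) x‖ ^ 2
          + lam * (q₂ x * (u x - u₂ x) ^ 2)))
      = ∫ x in Ω, ((p₁ x - p₂ x) * (‖gradient u x‖ ^ 2 - ⟪gradient u₁ x, gradient u₂ x⟫)
          + lam * ((q₁ x - q₂ x) * ((u x) ^ 2 - u₁ x * u₂ x))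
          - 2 * (f₁ x - f₂ x) * (u x - (u₁ x + u₂ x) / 2)) :=
  Glambda_difference_formula_general Ω lam u u₁ u₂ p₁ q₁ f₁ p₂ q₂ f₂ hu hu₁ hu₂ hIp hIq hIf hweak1a
    hweak1b hweak2a hweak2b
end

section
/- Suppose u and u_c are continuous and differentiable on ℝⁿ and u − u_c is square-integrable on Ω. Then the following are equivalent: (i) for all bounded measurable h₁, h₂ : ℝⁿ → ℝ and all square-integrable h₃ : ℝⁿ → ℝ for which the integrand below is integrable, ∫_Ω ( (|∇u|² − |∇u_c|²) h₁ + λ (u² − u_c²) h₂ − 2 (u − u_c) h₃ ) dx = 0; (ii) u = u_c at every point of Ω. (That is, the Gâteaux differential G_λ′(c) vanishes in all admissible directions if and only if u = u_c.) -/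
open MeasureTheory Set
open scoped RealInnerProductSpace

/-- The Gâteaux differential `G_λ'(c)` vanishes in all admissible directions
`(h₁, h₂, h₃)` (with `h₁, h₂` bounded measurable and `h₃` square-integrable, whenever the
integrand is integrable) if and only if `u = u_c` at every point of `Ω`. -/
theorem gateaux_derivative_zero_iff {n : ℕ} (hn : 1 ≤ n)
    (Ω : Set (EuclideanSpace ℝ (Fin n))) (hΩ : IsOpen Ω)
    (lam : ℝ) (u uc : EuclideanSpace ℝ (Fin n) → ℝ)
    (huC : Continuous u) (hu : Differentiable ℝ u)
    (hucC : Continuous uc) (huc : Differentiable ℝ uc)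
    (hsq : IntegrableOn (fun x => (u x - uc x) ^ 2) Ω) :
    (∀ h₁ h₂ h₃ : EuclideanSpace ℝ (Fin n) → ℝ,
        Measurable h₁ → Measurable h₂ →
        (∃ B : ℝ, ∀ x, |h₁ x| ≤ B) → (∃ B : ℝ, ∀ x, |h₂ x| ≤ B) →
        IntegrableOn (fun x => (h₃ x) ^ 2) Ω →
        IntegrableOn (fun x =>
          (‖gradient u x‖ ^ 2 - ‖gradient uc x‖ ^ 2) * h₁ x
            + lam * (((u x) ^ 2 - (uc x) ^ 2) * h₂ x)
            - 2 * (u x - uc x) * h₃ x) Ω →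
        (∫ x in Ω, ((‖gradient u x‖ ^ 2 - ‖gradient uc x‖ ^ 2) * h₁ x
            + lam * (((u x) ^ 2 - (uc x) ^ 2) * h₂ x)
            - 2 * (u x - uc x) * h₃ x)) = 0)
      ↔ ∀ x ∈ Ω, u x = uc x := by
  constructor
  · intro H
    have key := H 0 0 (fun x => u x - uc x) measurable_const measurable_const
      ⟨0, fun x => by simp⟩ ⟨0, fun x => by simp⟩ hsq
      (by
        have : (fun x =>
            (‖gradient u x‖ ^ 2 - ‖gradient uc x‖ ^ 2) * (0 : EuclideanSpace ℝ (Fin n) → ℝ) x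
              + lam * (((u x) ^ 2 - (uc x) ^ 2) * (0 : EuclideanSpace ℝ (Fin n) → ℝ) x)
              - 2 * (u x - uc x) * (u x - uc x))
            = fun x => (-2 : ℝ) * (u x - uc x) ^ 2 := by
          funext x; simp; ring
        rw [this]
        exact hsq.const_mul (-2))
    have key2 : (∫ x in Ω, (-2 : ℝ) * (u x - uc x) ^ 2) = 0 := by
      rw [← key]
      apply setIntegral_congr_fun hΩ.measurableSet
      intro x _
      simp; ring
    rw [integral_const_mul] at key2
    have hz : (∫ x in Ω, (u x - uc x) ^ 2) = 0 := by linarith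
    have hae : (fun x => (u x - uc x) ^ 2) =ᵐ[volume.restrict Ω] 0 :=
      (integral_eq_zero_iff_of_nonneg (fun x => sq_nonneg _) hsq).mp hz
    have heq : EqOn (fun x => (u x - uc x) ^ 2) 0 Ω :=
      Measure.eqOn_open_of_ae_eq hae hΩ
        (((huC.sub hucC).pow 2).continuousOn) continuousOn_const
    intro x hx
    have := heq hx
    simp only [Pi.zero_apply, pow_eq_zero_iff, sub_eq_zero] at this
    nlinarith [this]
  · intro H
    have hgrad : ∀ x ∈ Ω, gradient u x = gradient uc x := by
      intro x hx
      have hev : u =ᶠ[nhds x] uc :=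
        Filter.eventuallyEq_of_mem (hΩ.mem_nhds hx) H
      have : fderiv ℝ u x = fderiv ℝ uc x := hev.fderiv_eq
      simp [gradient, this]
    intro h₁ h₂ h₃ _ _ _ _ _ _
    rw [show (0 : ℝ) = ∫ x in Ω, (0 : ℝ) by simp]
    apply setIntegral_congr_fun hΩ.measurableSet
    intro x hx
    simp only []
    rw [hgrad x hx, H x hx]
    ring
end

section
/- Under the hypotheses of the second-derivative formula g″(0) = 2 ∫_Ω ( p |∇w|² + λ q w² ) dx for g(t) = G_λ(c + t h), assume in addition that there are ν > 0, M ≥ 0, C ≥ 0 with p(x) ≥ ν and |q(x)| ≤ M for a.e. x ∈ Ω, that |∇w|² and w² are integrable on Ω, that w satisfies the Poincaré inequality ∫_Ω w² dx ≤ C ∫_Ω |∇w|² dx, and that |λ| M C ≤ ν. Then g″(0) ≥ 0, i.e. G_λ is convex along the line t ↦ c + t h. If moreover |λ| M C < ν and w is continuous, then g″(0) = 0 implies w = 0 at every point of Ω. -/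
open MeasureTheory Set
open scoped RealInnerProductSpace

/-- Under the hypotheses of the second-derivative formula
`g''(0) = 2 ∫_Ω (p |∇w|² + λ q w²) dx` for `g(t) = G_λ(c + t h)`, if in addition `p ≥ ν > 0` and
`|q| ≤ M` a.e. on `Ω`, `|∇w|²` and `w²` are integrable on `Ω`, `w` satisfies the Poincaré
inequality with constant `C ≥ 0`, and `|λ| M C ≤ ν`, then `g''(0) ≥ 0` (convexity of `G_λ` along
the line `t ↦ c + t h`); and if moreover `|λ| M C < ν` and `w` is continuous, then `g''(0) = 0`
implies `w = 0` at every point of `Ω`. -/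
theorem Glambda_convex_along_lines {n : ℕ} (hn : 1 ≤ n)
    (Ω : Set (EuclideanSpace ℝ (Fin n))) (hΩ : IsOpen Ω)
    (lam : ℝ) (u uc p q f h₁ h₂ h₃ w : EuclideanSpace ℝ (Fin n) → ℝ)
    (ut : ℝ → EuclideanSpace ℝ (Fin n) → ℝ) (hut0 : ut 0 = uc)
    (g : ℝ → ℝ)
    (hg : g = fun t => ∫ x in Ω,
        ((p x + t * h₁ x) * ‖gradient (fun y => u y - ut t y) x‖ ^ 2
          + lam * ((q x + t * h₂ x) * (u x - ut t x) ^ 2)))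
    (hsecond : deriv (deriv g) 0
        = 2 * ∫ x in Ω, (p x * ‖gradient w x‖ ^ 2 + lam * (q x * (w x) ^ 2)))
    (ν M C : ℝ) (hν : 0 < ν) (hM : 0 ≤ M) (hC : 0 ≤ C)
    (hp : ∀ᵐ x ∂(volume.restrict Ω), ν ≤ p x)
    (hq : ∀ᵐ x ∂(volume.restrict Ω), |q x| ≤ M)
    (hw : Differentiable ℝ w)
    (hI1 : IntegrableOn (fun x => ‖gradient w x‖ ^ 2) Ω)
    (hI2 : IntegrableOn (fun x => (w x) ^ 2) Ω)
    (hI3 : IntegrableOn (fun x => p x * ‖gradient w x‖ ^ 2) Ω)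
    (hI4 : IntegrableOn (fun x => q x * (w x) ^ 2) Ω)
    (hPoincare : ∫ x in Ω, (w x) ^ 2 ≤ C * ∫ x in Ω, ‖gradient w x‖ ^ 2)
    (hsmall : |lam| * M * C ≤ ν) :
    0 ≤ deriv (deriv g) 0 ∧
      (|lam| * M * C < ν → Continuous w →
        (deriv (deriv g) 0 = 0 → ∀ x ∈ Ω, w x = 0)) := by
  set A := ∫ x in Ω, ‖gradient w x‖ ^ 2 with hAdef
  set B := ∫ x in Ω, (w x) ^ 2 with hBdef
  have hA0 : 0 ≤ A := integral_nonneg fun x => by positivity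
  have hB0 : 0 ≤ B := integral_nonneg fun x => by positivity
  have hIq : IntegrableOn (fun x => lam * (q x * (w x) ^ 2)) Ω := hI4.const_mul lam
  have hsplit : (∫ x in Ω, (p x * ‖gradient w x‖ ^ 2 + lam * (q x * (w x) ^ 2)))
      = (∫ x in Ω, p x * ‖gradient w x‖ ^ 2) + ∫ x in Ω, lam * (q x * (w x) ^ 2) :=
    integral_add hI3 hIq
  have h1 : ν * A ≤ ∫ x in Ω, p x * ‖gradient w x‖ ^ 2 := by
    rw [hAdef, ← integral_const_mul]
    exact integral_mono_ae (hI1.const_mul ν) hI3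
      (hp.mono fun x hx => mul_le_mul_of_nonneg_right hx (by positivity))
  have h2 : -(|lam| * M) * B ≤ ∫ x in Ω, lam * (q x * (w x) ^ 2) := by
    rw [hBdef, ← integral_const_mul]
    refine integral_mono_ae (hI2.const_mul _) hIq (hq.mono fun x hx => ?_)
    have habs : |lam * q x| ≤ |lam| * M := by
      rw [abs_mul]
      exact mul_le_mul_of_nonneg_left hx (abs_nonneg lam)
    have hlow : -(|lam| * M) ≤ lam * q x := (neg_abs_le _).trans' (by linarith [neg_abs_le (lam * q x)])
    calc -(|lam| * M) * (w x) ^ 2 ≤ (lam * q x) * (w x) ^ 2 :=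
          mul_le_mul_of_nonneg_right hlow (sq_nonneg _)
      _ = lam * (q x * (w x) ^ 2) := by ring
  have hBCA : |lam| * M * B ≤ |lam| * M * (C * A) :=
    mul_le_mul_of_nonneg_left hPoincare (mul_nonneg (abs_nonneg lam) hM)
  have hkey : (ν - |lam| * M * C) * A ≤
      ∫ x in Ω, (p x * ‖gradient w x‖ ^ 2 + lam * (q x * (w x) ^ 2)) := by
    rw [hsplit]; nlinarith
  constructor
  · rw [hsecond]
    nlinarith
  · intro hlt hcont heq
    have hint0 : (∫ x in Ω, (p x * ‖gradient w x‖ ^ 2 + lam * (q x * (w x) ^ 2))) = 0 := by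
      rw [hsecond] at heq; linarith
    have hAzero : A = 0 := by nlinarith
    have hBzero : B = 0 := by nlinarith
    have hae : (fun x => (w x) ^ 2) =ᶠ[ae (volume.restrict Ω)] 0 :=
      (integral_eq_zero_iff_of_nonneg (fun x => sq_nonneg (w x)) hI2).mp hBzero
    intro x hx
    by_contra hwx
    have hopen : IsOpen (w ⁻¹' {(0:ℝ)}ᶜ) := isOpen_compl_singleton.preimage hcont
    have hpos : 0 < volume (Ω ∩ w ⁻¹' {(0:ℝ)}ᶜ) :=
      (hΩ.inter hopen).measure_pos volume ⟨x, hx, hwx⟩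
    have hzero : volume.restrict Ω {y | ¬ (w y) ^ 2 = 0} = 0 := by
      have := hae
      rw [Filter.EventuallyEq, ae_iff] at this
      simpa using this
    have hsets : {y | ¬ (w y) ^ 2 = 0} = w ⁻¹' {(0:ℝ)}ᶜ := by
      ext y; simp [pow_eq_zero_iff]
    rw [hsets, Measure.restrict_apply (hopen.measurableSet)] at hzero
    rw [Set.inter_comm] at hpos
    exact absurd hzero (ne_of_gt hpos)
end
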